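/- Fix α ≥ 1 and the graph class K_α⁺ = {finite graphs A : δ_α(B) ≥ 0 for all B ⊆ A} with A ≤_α B iff δ_α(C) − δ_α(A) ≥ 0 for all A ⊆ C ⊆ B. Then (K_α⁺, ≤_α) satisfies the smooth class axiom: if A_1, A_2 ⊆ A ∈ K_α⁺ and A_1 ≤_α A, then A_1 ∩ A_2 ≤_α A_2. -/
import Mathlib


open Finset

/-- The number of edges of the graph `G` with both endpoints in the
vertex set `X`. -/
def edgesIn {V : Type*} [Fintype V] [DecidableEq V] (G : SimpleGraph V)
    [DecidableRel G.Adj] (X : Finset V) : ℕ :=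
  (G.edgeFinset.filter (fun e => ∃ a ∈ X, ∃ b ∈ X, e = s(a, b))).card

/-- The pre-dimension `δ_α(X) = α·|X| − e(X)`. -/
noncomputable def predim {V : Type*} [Fintype V] [DecidableEq V] (G : SimpleGraph V)
    [DecidableRel G.Adj] (α : ℝ) (X : Finset V) : ℝ :=
  α * (X.card : ℝ) - (edgesIn G X : ℝ)

/-- `A ≤_α B`: `A ⊆ B` and `δ_α(C) ≥ δ_α(A)` for every intermediate
`A ⊆ C ⊆ B`. -/
noncomputable def strongLe {V : Type*} [Fintype V] [DecidableEq V] (G : SimpleGraph V)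
    [DecidableRel G.Adj] (α : ℝ) (A B : Finset V) : Prop :=
  A ⊆ B ∧ ∀ C : Finset V, A ⊆ C → C ⊆ B → predim G α A ≤ predim G α C

lemma pred_iff {V : Type*} [DecidableEq V] (X : Finset V) (e : Sym2 V) :
    (∃ a ∈ X, ∃ b ∈ X, e = s(a, b)) ↔ ∀ v ∈ e, v ∈ X := by
  induction e using Sym2.inductionOn with
  | hf u v =>
    constructor
    · rintro ⟨a, ha, b, hb, h⟩
      rw [Sym2.eq_iff] at h
      rcases h with ⟨rfl, rfl⟩ | ⟨rfl, rfl⟩ <;> intro w hw <;>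
        rcases Sym2.mem_iff.mp hw with rfl | rfl <;> assumption
    · intro h
      exact ⟨u, h u (Sym2.mem_mk_left u v), v, h v (Sym2.mem_mk_right u v), rfl⟩

lemma edgesIn_submod {V : Type*} [Fintype V] [DecidableEq V] (G : SimpleGraph V)
    [DecidableRel G.Adj] (X Y : Finset V) :
    edgesIn G X + edgesIn G Y ≤ edgesIn G (X ∪ Y) + edgesIn G (X ∩ Y) := by
  unfold edgesIn
  rw [← Finset.card_union_add_card_inter]
  refine add_le_add (Finset.card_le_card ?_) (le_of_eq (congrArg Finset.card ?_))
  · intro e he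
    rw [Finset.mem_union, Finset.mem_filter, Finset.mem_filter] at he
    rw [Finset.mem_filter, pred_iff]
    rcases he with ⟨he, h⟩ | ⟨he, h⟩ <;> rw [pred_iff] at h <;>
      exact ⟨he, fun v hv => Finset.mem_union.mpr
        (by first | exact Or.inl (h v hv) | exact Or.inr (h v hv))⟩
  · ext e
    rw [Finset.mem_inter, Finset.mem_filter, Finset.mem_filter, Finset.mem_filter,
      pred_iff, pred_iff, pred_iff]
    constructor
    · rintro ⟨⟨he, hX⟩, _, hY⟩
      exact ⟨he, fun v hv => Finset.mem_inter.mpr ⟨hX v hv, hY v hv⟩⟩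
    · rintro ⟨he, h⟩
      exact ⟨⟨he, fun v hv => (Finset.mem_inter.mp (h v hv)).1⟩,
             he, fun v hv => (Finset.mem_inter.mp (h v hv)).2⟩

lemma predim_submod {V : Type*} [Fintype V] [DecidableEq V] (G : SimpleGraph V)
    [DecidableRel G.Adj] (α : ℝ) (X Y : Finset V) :
    predim G α (X ∪ Y) + predim G α (X ∩ Y) ≤ predim G α X + predim G α Y := by
  have hc : (X ∪ Y).card + (X ∩ Y).card = X.card + Y.card :=
    Finset.card_union_add_card_inter X Y
  have he := edgesIn_submod G X Y
  unfold predim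
  have hc' : ((X ∪ Y).card : ℝ) + ((X ∩ Y).card : ℝ) = (X.card : ℝ) + (Y.card : ℝ) := by
    exact_mod_cast congrArg (Nat.cast : ℕ → ℝ) hc
  have he' : (edgesIn G X : ℝ) + (edgesIn G Y : ℝ) ≤
      (edgesIn G (X ∪ Y) : ℝ) + (edgesIn G (X ∩ Y) : ℝ) := by exact_mod_cast he
  have h3 : α * ((X ∪ Y).card : ℝ) + α * ((X ∩ Y).card : ℝ)
      = α * (X.card : ℝ) + α * (Y.card : ℝ) := by
    rw [← mul_add, ← mul_add, hc']
  linarith [h3, he']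

/-- the smooth class axiom for `(K_α⁺, ≤_α)`:
if `A1, A2 ⊆ A`, all subgraphs of `A` have nonnegative `δ_α` (`A ∈ K_α⁺`)
and `A1 ≤_α A`, then `A1 ∩ A2 ≤_α A2`. -/
theorem stmt13 {V : Type*} [Fintype V] [DecidableEq V] (M : SimpleGraph V)
    [DecidableRel M.Adj] (α : ℝ) (hα : 1 ≤ α) (A A1 A2 : Finset V)
    (hK : ∀ D : Finset V, D ⊆ A → 0 ≤ predim M α D)
    (h1 : A1 ⊆ A) (h2 : A2 ⊆ A) (hle : strongLe M α A1 A) :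
    strongLe M α (A1 ∩ A2) A2 := by
  refine ⟨Finset.inter_subset_right, fun C hC1 hC2 => ?_⟩
  have hCA1 : C ∩ A1 = A1 ∩ A2 := by
    apply Finset.Subset.antisymm
    · intro x hx
      rcases Finset.mem_inter.mp hx with ⟨hxC, hxA1⟩
      exact Finset.mem_inter.mpr ⟨hxA1, hC2 hxC⟩
    · intro x hx
      exact Finset.mem_inter.mpr ⟨hC1 hx, (Finset.mem_inter.mp hx).1⟩
  have hU : predim M α A1 ≤ predim M α (C ∪ A1) :=
    hle.2 _ Finset.subset_union_right
      (Finset.union_subset (hC2.trans h2) hle.1)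
  have hs := predim_submod M α C A1
  rw [hCA1] at hs
  linarith
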